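/- arXiv:1905.12161 — 3 statements merged into one kernel-verified Lean document; each statement's English description precedes it below -/
import Mathlib

section
/- Every finite graph G contains a spanning subgraph H with chromatic number at most c such that for every vertex subset X, d_H(X) ≥ ((c-1)/c)·d_G(X), where c ≥ 2 is any given integer. -/
open Finset

namespace Paper

variable {V : Type*} [Fintype V] [DecidableEq V]

/-- Bool test: the edge `e` has exactly one end in `X`. -/
def crossB (X : Finset V) : Sym2 V → Bool :=
  Sym2.lift ⟨fun a b => xor (decide (a ∈ X)) (decide (b ∈ X)), by
    intro a b; simp [Bool.xor_comm]⟩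

/-- Bool test: both ends of the edge `e` lie in `X`. -/
def bothB (X : Finset V) : Sym2 V → Bool :=
  Sym2.lift ⟨fun a b => decide (a ∈ X) && decide (b ∈ X), by
    intro a b; simp [Bool.and_comm]⟩

/-- A finite multigraph on vertex set `V`: a multiset of loopless edges. -/
structure MGraph (V : Type*) where
  edges : Multiset (Sym2 V)
  loopless : ∀ e ∈ edges, ¬ e.IsDiag

/-- Number of edges of the edge multiset `E` with exactly one end in `X`. -/
def cutE (E : Multiset (Sym2 V)) (X : Finset V) : ℕ :=
  (E.filter (fun e => crossB X e = true)).card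

/-- `d_G(X)`: number of edges of `G` with exactly one end in `X`. -/
def cut (G : MGraph V) (X : Finset V) : ℕ := cutE G.edges X

/-- Degree of a vertex in a multigraph. -/
def deg (G : MGraph V) (v : V) : ℕ := cut G {v}

/-- Number of edges of `E` with both ends in `S`. -/
def insideE (E : Multiset (Sym2 V)) (S : Finset V) : ℕ :=
  (E.filter (fun e => bothB S e = true)).card

/-- `P` is a partition of the vertex set `W` into nonempty parts. -/
def IsPartitionOf (W : Finset V) (P : Finset (Finset V)) : Prop :=
  (∀ A ∈ P, A.Nonempty) ∧ (∀ A ∈ P, ∀ B ∈ P, A ≠ B → Disjoint A B) ∧ P.sup id = W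

/-- Number of edges of `E` joining different parts of `P`. -/
def ePart (E : Multiset (Sym2 V)) (P : Finset (Finset V)) : ℕ :=
  (E.filter (fun e => decide (∀ A ∈ P, bothB A e = false) = true)).card

/-- The edge multiset `E`, restricted to the vertex set `W`, is `l`-partition-connected:
for every partition `P` of `W`, the number of edges (inside `W`) joining different parts
is at least `Σ_{A∈P} l(A) − l(W)`. -/
def LPCOn (E : Multiset (Sym2 V)) (W : Finset V) (l : Finset V → ℝ) : Prop :=
  ∀ P : Finset (Finset V), IsPartitionOf W P →
    (ePart (E.filter (fun e => bothB W e = true)) P : ℝ) ≥ (∑ A ∈ P, l A) - l W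

/-- The multigraph `G` is `l`-partition-connected. -/
def LPC (G : MGraph V) (l : Finset V → ℝ) : Prop := LPCOn G.edges Finset.univ l

/-- `t`-partition-connectivity (constant function `t`). -/
def PC (G : MGraph V) (t : ℝ) : Prop := LPC G (fun _ => t)

/-- `m`-tree-connectivity, via the Nash-Williams–Tutte theorem identified with
`m`-partition-connectivity. -/
def TreeConn (m : ℕ) (G : MGraph V) : Prop := PC G (m : ℝ)

/-- `G` is properly `c`-colorable. -/
def MColorable (c : ℕ) (G : MGraph V) : Prop :=
  ∃ f : V → Fin c, ∀ a b : V, s(a, b) ∈ G.edges → f a ≠ f b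

/-- `G` is bipartite. -/
def MBipartite (G : MGraph V) : Prop := MColorable 2 G

/-- `P` is the partition of `W` into the (vertex sets of the) `l`-partition-connected
components of the graph with edge multiset `E` restricted to `W`: each part induces an
`l`-partition-connected subgraph, and every set inducing an `l`-partition-connected
subgraph lies inside one part. -/
def IsLPCComponents (E : Multiset (Sym2 V)) (W : Finset V) (l : Finset V → ℝ)
    (P : Finset (Finset V)) : Prop :=
  IsPartitionOf W P ∧ (∀ A ∈ P, LPCOn E A l) ∧
    ∀ B ⊆ W, B.Nonempty → LPCOn E B l → ∃ A ∈ P, B ⊆ A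

/-- `Θ_l` computed with respect to the component partition `P` of `W`. -/
noncomputable def ThetaVal (E : Multiset (Sym2 V)) (W : Finset V) (l : Finset V → ℝ)
    (P : Finset (Finset V)) : ℝ :=
  (∑ A ∈ P, l A) - (ePart (E.filter (fun e => bothB W e = true)) P : ℝ)

/-- Intersecting supermodular set function. -/
def IntersectingSupermodular (l : Finset V → ℝ) : Prop :=
  ∀ A B : Finset V, (A ∩ B).Nonempty → l (A ∩ B) + l (A ∪ B) ≥ l A + l B

/-- Nonincreasing set function. -/
def Nonincreasing (l : Finset V → ℝ) : Prop :=
  ∀ A B : Finset V, A.Nonempty → A ⊆ B → l A ≥ l B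

/-- Edge multiset of a simple graph. -/
noncomputable def SGedges (G : SimpleGraph V) : Multiset (Sym2 V) :=
  (Set.toFinite G.edgeSet).toFinset.val

/-- `m`-tree-connectivity of a simple graph, via partition-connectivity. -/
noncomputable def TreeConnSG (m : ℕ) (G : SimpleGraph V) : Prop :=
  LPCOn (SGedges G) Finset.univ (fun _ => (m : ℝ))

/-- Degree in a simple graph. -/
noncomputable def degSG (G : SimpleGraph V) (v : V) : ℕ := Nat.card (G.neighborSet v)

/-- `G` is `t`-tough. -/
def Tough (t : ℝ) (G : SimpleGraph V) : Prop :=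
  ∀ S : Finset V,
    (Nat.card ((G.induce ((↑S : Set V)ᶜ)).ConnectedComponent) : ℝ) ≤
      max 1 ((S.card : ℝ) / t)

/-- Bool test: the two ends of `e` receive different values under `f`. -/
def diffB {c : ℕ} (f : V → Fin c) : Sym2 V → Bool :=
  Sym2.lift ⟨fun a b => decide (f a ≠ f b), by
    intro a b; simp [ne_comm]⟩

end Paper

open Paper

/-!
Colour the vertices with `c` colours so that the number of monochromatic edges is minimal, and
let `H` keep the bichromatic edges. Adding a fixed `k ∈ ℤ/c` to the colours of the vertices of `X`
affects only the edges crossing `X`, and each crossing edge becomes monochromatic for exactly one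
of the `c` shifts. By minimality, at most `d_G(X)/c` crossing edges are monochromatic.
-/

section MultisetCount

variable {α ι : Type*} [Fintype ι]

lemma Multiset.sum_card_filter_eq_card_filter (p : ι → α → Bool) (q : α → Bool)
    (s : Multiset α)
    (h : ∀ a ∈ s, #{k | p k a = true} = if q a = true then 1 else 0) :
    ∑ k, (s.filter (p k · = true)).card = (s.filter (q · = true)).card := by
  induction s using Multiset.induction_on with
  | empty => simp
  | cons a s ih =>
    simp only [Multiset.filter_cons, Multiset.card_add, apply_ite Multiset.card,
      Multiset.card_singleton, Multiset.card_zero, Finset.sum_add_distrib,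
      ih fun b hb => h b (Multiset.mem_cons_of_mem hb)]
    rw [← h a (Multiset.mem_cons_self a s), Finset.card_filter]

end MultisetCount

namespace Paper

section Cut

variable {V : Type*} [DecidableEq V] {c : ℕ}

lemma cutE_filter_add_cutE_filter_not (E : Multiset (Sym2 V)) (p : Sym2 V → Bool)
    (X : Finset V) :
    cutE (E.filter (p · = true)) X + cutE (E.filter (p · = false)) X = cutE E X := by
  simp only [cutE, ← Multiset.card_add, ← Multiset.filter_add, ← Bool.not_eq_true,
    Multiset.filter_add_not]

lemma cutE_add_card_filter_crossB_eq_false (M : Multiset (Sym2 V)) (X : Finset V) :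
    cutE M X + (M.filter (crossB X · = false)).card = M.card := by
  simp only [cutE, ← Multiset.card_add, ← Bool.not_eq_true, Multiset.filter_add_not]

def monoEdges (f : V → Fin c) (E : Multiset (Sym2 V)) : Multiset (Sym2 V) :=
  E.filter (diffB f · = false)

def shiftOn (X : Finset V) (f : V → Fin c) (k : Fin c) : V → Fin c :=
  fun v => if v ∈ X then f v + k else f v

lemma diffB_shiftOn_of_crossB_eq_false {X : Finset V} {f : V → Fin c} {e : Sym2 V}
    (k : Fin c) (he : crossB X e = false) : diffB (shiftOn X f k) e = diffB f e := by
  induction e using Sym2.ind with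
  | _ a b => by_cases ha : a ∈ X <;> by_cases hb : b ∈ X <;> simp_all [crossB, diffB, shiftOn]

lemma card_filter_diffB_shiftOn_of_crossB_eq_true [NeZero c] {X : Finset V} {f : V → Fin c}
    {e : Sym2 V} (he : crossB X e = true) :
    #{k | diffB (shiftOn X f k) e = false} = 1 := by
  induction e using Sym2.ind with
  | _ a b =>
    wlog ha : a ∈ X generalizing a b
    · rw [Sym2.eq_swap] at he ⊢
      exact this b a he (by simp_all [crossB])
    have hb : b ∉ X := by simpa [crossB, ha] using he
    refine Finset.card_eq_one.mpr ⟨f b - f a, ?_⟩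
    ext k
    simp [diffB, shiftOn, ha, hb, eq_sub_iff_add_eq, add_comm]

lemma sum_cutE_monoEdges_shiftOn [NeZero c] (E : Multiset (Sym2 V)) (X : Finset V)
    (f : V → Fin c) : ∑ k, cutE (monoEdges (shiftOn X f k) E) X = cutE E X := by
  have hcut (g : V → Fin c) : cutE (monoEdges g E) X =
      (E.filter fun e => (crossB X e && !diffB g e) = true).card := by
    simp only [cutE, monoEdges, Multiset.filter_filter, Bool.and_eq_true, Bool.not_eq_true']
  simp only [hcut]
  refine Multiset.sum_card_filter_eq_card_filter _ _ E fun e _ => ?_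
  cases he : crossB X e
  · simp
  · simpa using card_filter_diffB_shiftOn_of_crossB_eq_true he

lemma cutE_monoEdges_le_of_card_le {f g : V → Fin c} {E : Multiset (Sym2 V)} {X : Finset V}
    (hX : ∀ e ∈ E, crossB X e = false → diffB g e = diffB f e)
    (hfg : (monoEdges f E).card ≤ (monoEdges g E).card) :
    cutE (monoEdges f E) X ≤ cutE (monoEdges g E) X := by
  have hnoncross : (monoEdges g E).filter (crossB X · = false) =
      (monoEdges f E).filter (crossB X · = false) := by
    simp only [monoEdges, Multiset.filter_filter]
    exact Multiset.filter_congr fun e he => and_congr_right fun hc => by rw [hX e he hc]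
  have hf := cutE_add_card_filter_crossB_eq_false (monoEdges f E) X
  have hg := cutE_add_card_filter_crossB_eq_false (monoEdges g E) X
  rw [hnoncross] at hg
  omega

lemma mul_cutE_monoEdges_le [NeZero c] {f : V → Fin c} {E : Multiset (Sym2 V)}
    (hf : ∀ g : V → Fin c, (monoEdges f E).card ≤ (monoEdges g E).card) (X : Finset V) :
    c * cutE (monoEdges f E) X ≤ cutE E X :=
  calc c * cutE (monoEdges f E) X = ∑ _k : Fin c, cutE (monoEdges f E) X := by simp
  _ ≤ ∑ k, cutE (monoEdges (shiftOn X f k) E) X :=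
    Finset.sum_le_sum fun k _ => cutE_monoEdges_le_of_card_le
      (fun _ _ he => diffB_shiftOn_of_crossB_eq_false k he) (hf _)
  _ = cutE E X := sum_cutE_monoEdges_shiftOn E X f

theorem exists_coloring_sub_one_mul_cutE_le [NeZero c] (E : Multiset (Sym2 V)) :
    ∃ f : V → Fin c, ∀ X : Finset V,
      (c - 1) * cutE E X ≤ c * cutE (E.filter (diffB f · = true)) X := by
  let f := Function.argmin fun g : V → Fin c => (monoEdges g E).card
  refine ⟨f, fun X => ?_⟩
  have hmono : c * cutE (monoEdges f E) X ≤ cutE E X :=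
    mul_cutE_monoEdges_le (Function.argmin_le (fun g : V → Fin c => (monoEdges g E).card) ·) X
  have hsplit := cutE_filter_add_cutE_filter_not E (diffB f) X
  rw [monoEdges] at hmono
  rw [Nat.sub_one_mul, ← hsplit, mul_add]
  omega

end Cut

lemma SGedges_inf_comap_top {V : Type*} [Fintype V] {c : ℕ} (G : SimpleGraph V)
    (f : V → Fin c) :
    SGedges (G ⊓ (⊤ : SimpleGraph (Fin c)).comap f) = (SGedges G).filter (diffB f · = true) := by
  have hmem (K : SimpleGraph V) (e : Sym2 V) : e ∈ SGedges K ↔ e ∈ K.edgeSet := by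
    simp [SGedges]
  have hnodup (K : SimpleGraph V) : (SGedges K).Nodup := Finset.nodup _
  refine (Multiset.Nodup.ext (hnodup _) ((hnodup G).filter _)).mpr fun e => ?_
  rw [Multiset.mem_filter, hmem, hmem]
  induction e using Sym2.ind with
  | _ a b => simp [diffB]

end Paper

theorem stmt1 {V : Type*} [Fintype V] [DecidableEq V] (G : SimpleGraph V) (c : ℕ)
    (hc : 2 ≤ c) :
    ∃ H : SimpleGraph V, H ≤ G ∧ H.Colorable c ∧
      ∀ X : Finset V, c * cutE (SGedges H) X ≥ (c - 1) * cutE (SGedges G) X := by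
  have : NeZero c := ⟨by omega⟩
  obtain ⟨f, hf⟩ := exists_coloring_sub_one_mul_cutE_le (c := c) (SGedges G)
  refine ⟨G ⊓ (⊤ : SimpleGraph (Fin c)).comap f, inf_le_left,
    ⟨SimpleGraph.Coloring.mk f fun h => h.2⟩, fun X => ?_⟩
  rw [SGedges_inf_comap_top]
  exact hf X
end

section
/- Every 2m-tree-connected multigraph G (i.e., G contains 2m pairwise edge-disjoint spanning trees) has a bipartite spanning subgraph H containing m pairwise edge-disjoint spanning trees such that for every vertex set X, d_H(X) ≥ d_G(X)/2. -/
open Finset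

open Paper

/-!
Take a 2-colouring `f` of the vertices maximising the number of bichromatic edges, and let `H`
be the bichromatic edges. Recolouring `X` swaps the bichromatic and monochromatic edges of the
cut `∂X`, so maximality forces at least half of `∂_G X` to be in `H`. Summing over the parts of a
partition, each crossing edge is counted twice, hence `H` has at least half as many crossing
edges as `G`, and `2m`-partition-connectivity of `G` passes to `m`-partition-connectivity of `H`.
-/

open Finset

lemma Multiset.card_filter_xor_add_two_mul {α : Type*} (s : Multiset α) (p q : α → Bool) :
    (s.filter fun x => xor (p x) (q x) = true).card +
        2 * (s.filter fun x => (p x && q x) = true).card =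
      (s.filter fun x => p x = true).card + (s.filter fun x => q x = true).card := by
  induction s using Multiset.induction with
  | empty => simp
  | cons a s ih =>
    simp only [← Multiset.countP_eq_card_filter, Multiset.countP_cons] at ih ⊢
    cases p a <;> cases q a <;> simp +decide only [if_true, if_false] <;> omega

namespace Paper

variable {V : Type*}

@[simp]
lemma diffB_mk {c : ℕ} (f : V → Fin c) (a b : V) : diffB f s(a, b) = decide (f a ≠ f b) := rfl

def bichromaticSubgraph {c : ℕ} (G : MGraph V) (f : V → Fin c) : MGraph V where
  edges := G.edges.filter fun e => diffB f e = true
  loopless e he := G.loopless e (Multiset.mem_of_mem_filter he)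

lemma bichromaticSubgraph_edges_le {c : ℕ} (G : MGraph V) (f : V → Fin c) :
    (bichromaticSubgraph G f).edges ≤ G.edges :=
  Multiset.filter_le _ _

lemma mColorable_bichromaticSubgraph {c : ℕ} (G : MGraph V) (f : V → Fin c) :
    MColorable c (bichromaticSubgraph G f) :=
  ⟨f, fun a b hab => by simpa using (Multiset.mem_filter.1 hab).2⟩

variable [DecidableEq V]

@[simp]
lemma crossB_mk (X : Finset V) (a b : V) :
    crossB X s(a, b) = xor (decide (a ∈ X)) (decide (b ∈ X)) := rfl

@[simp]
lemma bothB_mk (X : Finset V) (a b : V) :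
    bothB X s(a, b) = (decide (a ∈ X) && decide (b ∈ X)) := rfl

lemma IsPartitionOf.exists_mem_iff {W : Finset V} {P : Finset (Finset V)}
    (hP : IsPartitionOf W P) {v : V} (hv : v ∈ W) : ∃ A ∈ P, ∀ B ∈ P, v ∈ B ↔ B = A := by
  rw [← hP.2.2] at hv
  obtain ⟨A, hA, hvA⟩ := Finset.mem_sup.1 hv
  refine ⟨A, hA, fun B hB => ⟨fun hvB => ?_, fun h => h ▸ hvA⟩⟩
  by_contra hne
  exact Finset.disjoint_left.1 (hP.2.1 B hB A hA hne) hvB hvA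

/-- An edge crosses either no part of a partition, or exactly the two parts containing its ends. -/
lemma IsPartitionOf.sum_crossB {W : Finset V} {P : Finset (Finset V)} (hP : IsPartitionOf W P)
    {a b : V} (ha : a ∈ W) (hb : b ∈ W) :
    ∑ A ∈ P, (if crossB A s(a, b) = true then 1 else 0) =
      2 * if ∀ A ∈ P, bothB A s(a, b) = false then 1 else 0 := by
  obtain ⟨Aa, hAa, memA⟩ := hP.exists_mem_iff ha
  obtain ⟨Ab, hAb, memB⟩ := hP.exists_mem_iff hb
  have cross : ∀ A ∈ P, (crossB A s(a, b) = true ↔ xor (decide (A = Aa)) (decide (A = Ab))) := by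
    intro A hA
    simp [memA A hA, memB A hA]
  have noBoth : (∀ A ∈ P, bothB A s(a, b) = false) ↔ Aa ≠ Ab := by
    refine ⟨fun h hEq => ?_, fun hne A hA => ?_⟩
    · simpa [(memA Aa hAa).2 rfl, (memB Aa hAa).2 hEq] using h Aa hAa
    · by_contra hboth
      simp only [bothB_mk, Bool.not_eq_false, Bool.and_eq_true, decide_eq_true_eq] at hboth
      exact hne (((memA A hA).1 hboth.1).symm.trans ((memB A hA).1 hboth.2))
  rw [Finset.sum_congr rfl fun A hA => if_congr (cross A hA) rfl rfl]
  by_cases hne : Aa = Ab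
  · rw [if_neg (noBoth.not.2 (not_not.2 hne))]
    simp [hne]
  · rw [if_pos (noBoth.2 hne)]
    have split : ∀ A ∈ P, (if xor (decide (A = Aa)) (decide (A = Ab)) then 1 else 0) =
        (if A = Aa then 1 else 0) + (if A = Ab then 1 else 0) := by
      intro A _
      by_cases h1 : A = Aa <;> by_cases h2 : A = Ab <;> simp_all
    rw [Finset.sum_congr rfl split, Finset.sum_add_distrib, Finset.sum_ite_eq' P Aa,
      Finset.sum_ite_eq' P Ab, if_pos hAa, if_pos hAb]

lemma sum_cutE_eq_two_mul_ePart [Fintype V] (E : Multiset (Sym2 V)) {P : Finset (Finset V)}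
    (hP : IsPartitionOf univ P) :
    ∑ A ∈ P, cutE E A = 2 * ePart E P := by
  induction E using Multiset.induction with
  | empty => simp [cutE, ePart]
  | cons e E ih =>
    induction e using Sym2.ind with
    | _ a b =>
      simp only [cutE, ePart, ← Multiset.countP_eq_card_filter, Multiset.countP_cons] at ih ⊢
      rw [Finset.sum_add_distrib, ih, hP.sum_crossB (mem_univ a) (mem_univ b), mul_add]
      congr 2
      simp

lemma filter_bothB_univ [Fintype V] (E : Multiset (Sym2 V)) :
    E.filter (fun e => bothB univ e = true) = E :=
  Multiset.filter_eq_self.2 fun e _ => by induction e using Sym2.ind with | _ a b => simp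

lemma PC.of_cut_le_two_mul [Fintype V] {t : ℝ} {G H : MGraph V}
    (hcut : ∀ X : Finset V, cut G X ≤ 2 * cut H X) (hG : PC G (2 * t)) : PC H t := by
  intro P hP
  have hePart : ePart G.edges P ≤ 2 * ePart H.edges P := by
    have := Finset.sum_le_sum fun A (_ : A ∈ P) => hcut A
    rw [← Finset.mul_sum] at this
    simp only [cut, sum_cutE_eq_two_mul_ePart G.edges hP,
      sum_cutE_eq_two_mul_ePart H.edges hP] at this
    omega
  have hGP := hG P hP
  simp only [filter_bothB_univ, Finset.sum_const, nsmul_eq_mul] at hGP ⊢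
  have : (ePart G.edges P : ℝ) ≤ 2 * ePart H.edges P := by exact_mod_cast hePart
  linarith

lemma diffB_flipOn (X : Finset V) (f : V → Fin 2) (e : Sym2 V) :
    diffB (fun v => if v ∈ X then (f v).rev else f v) e = xor (diffB f e) (crossB X e) := by
  induction e using Sym2.ind with
  | _ a b =>
    have rev_ne : ∀ x y : Fin 2, decide (x.rev ≠ y) = !decide (x ≠ y) ∧
        decide (x ≠ y.rev) = !decide (x ≠ y) ∧ decide (x.rev ≠ y.rev) = decide (x ≠ y) := by
      decide
    by_cases ha : a ∈ X <;> by_cases hb : b ∈ X <;> simp [ha, hb, rev_ne]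

lemma cut_le_two_mul_cut_bichromaticSubgraph (G : MGraph V) {f : V → Fin 2}
    (hf : ∀ g : V → Fin 2,
      (bichromaticSubgraph G g).edges.card ≤ (bichromaticSubgraph G f).edges.card)
    (X : Finset V) : cut G X ≤ 2 * cut (bichromaticSubgraph G f) X := by
  have hflip := hf fun v => if v ∈ X then (f v).rev else f v
  have hcount := G.edges.card_filter_xor_add_two_mul (diffB f) (crossB X)
  simp only [bichromaticSubgraph, diffB_flipOn] at hflip
  simp only [cut, cutE, bichromaticSubgraph, Multiset.filter_filter, Bool.and_eq_true] at hcount ⊢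
  rw [Multiset.filter_congr fun e _ => and_comm]
  omega

end Paper

theorem stmt5 {V : Type*} [Fintype V] [DecidableEq V] (m : ℕ) (G : MGraph V)
    (h : TreeConn (2 * m) G) :
    ∃ H : MGraph V, H.edges ≤ G.edges ∧ MBipartite H ∧ TreeConn m H ∧
      ∀ X : Finset V, 2 * cut H X ≥ cut G X := by
  obtain ⟨f, hf⟩ := Finite.exists_max fun f : V → Fin 2 => (bichromaticSubgraph G f).edges.card
  have hcut := cut_le_two_mul_cut_bichromaticSubgraph G hf
  exact ⟨bichromaticSubgraph G f, bichromaticSubgraph_edges_le G f,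
    mColorable_bichromaticSubgraph G f,
    PC.of_cut_le_two_mul hcut (by simpa [TreeConn] using h), hcut⟩
end

section
/- Let G be a multigraph with spanning subgraph G₀, let l be an intersecting supermodular real function on subsets of V(G) with l(∅)=0, and let ε > 0. Suppose G is (l/ε)-partition-connected and d_{G₀}(X) ≥ ε·d_G(X) for every X ⊆ V(G). Then for every S ⊆ V(G), Θ_l(G₀ \ S) ≤ Σ_{v∈S} (½ d_{G₀}(v) + (ε/2) d_G(v) − l(v)) + l(V(G)) − e_{G₀}(S). -/
/-!
Extend the component partition `P` of `V(G) \ S` by the singletons of `S` to a partition of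
`V(G)`. Partition-connectivity of `G` for `l / ε` bounds the sum of `l` over this partition,
minus `l(V(G))`, by `ε` times the number of crossing edges of `G`, which by double counting is
`(ε/2) Σ d_G(A)`. On the parts of `P` the degree condition replaces `ε d_G(A)` by `d_{G₀}(A)`,
and double counting the edges of `G₀` turns `Σ_{A ∈ P} d_{G₀}(A)` into
`2 e_{G₀ \ S}(P) + Σ_{v ∈ S} d_{G₀}(v) - 2 e_{G₀}(S)`.
-/

open Finset

namespace Paper

variable {V : Type*} [DecidableEq V]

theorem IsPartitionOf.subset {W : Finset V} {P : Finset (Finset V)} (h : IsPartitionOf W P)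
    {A : Finset V} (hA : A ∈ P) : A ⊆ W :=
  h.2.2 ▸ le_sup (f := id) hA

theorem IsPartitionOf.sum_ite_mem {W : Finset V} {P : Finset (Finset V)}
    (h : IsPartitionOf W P) (a : V) :
    (∑ A ∈ P, if a ∈ A then 1 else 0) = if a ∈ W then 1 else 0 := by
  rw [sum_boole, Nat.cast_id]
  split_ifs with ha
  · obtain ⟨A₀, hA₀, haA₀⟩ := mem_sup.mp (h.2.2.symm ▸ ha : a ∈ P.sup id)
    refine card_eq_one.mpr ⟨A₀, eq_singleton_iff_unique_mem.mpr
      ⟨mem_filter.mpr ⟨hA₀, haA₀⟩, fun B hB => ?_⟩⟩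
    obtain ⟨hB, haB⟩ := mem_filter.mp hB
    by_contra hne
    exact disjoint_left.mp (h.2.1 B hB A₀ hA₀ hne) haB haA₀
  · exact card_eq_zero.mpr <| filter_false_of_mem fun A hA haA =>
      ha (h.subset hA haA)

theorem IsPartitionOf.sum_ite_crossB {W : Finset V} {P : Finset (Finset V)}
    (h : IsPartitionOf W P) (e : Sym2 V) :
    (∑ A ∈ P, if crossB A e = true then 1 else 0)
      = 2 * (if (∀ A ∈ P, bothB A e = false) ∧ bothB W e = true then 1 else 0)
        + if crossB W e = true then 1 else 0 := by
  induction e using Sym2.inductionOn with | hf a b => ?_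
  by_cases hsep : ∀ A ∈ P, bothB A s(a, b) = false
  · have hsplit : ∀ A ∈ P, (if crossB A s(a, b) = true then 1 else 0)
        = (if a ∈ A then 1 else 0) + if b ∈ A then 1 else 0 := fun A hA => by
      have := hsep A hA
      by_cases ha : a ∈ A <;> by_cases hb : b ∈ A <;> simp_all [crossB, bothB]
    rw [sum_congr rfl hsplit, sum_add_distrib, h.sum_ite_mem, h.sum_ite_mem]
    simp only [eq_true hsep, true_and]
    by_cases ha : a ∈ W <;> by_cases hb : b ∈ W <;> simp [crossB, bothB, ha, hb]
  · obtain ⟨A₀, hA₀, ha, hb⟩ : ∃ A ∈ P, a ∈ A ∧ b ∈ A := by simpa [bothB] using hsep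
    have hcross : ∀ A ∈ P, crossB A s(a, b) = false := fun A hA => by
      obtain rfl | hne := eq_or_ne A A₀
      · simp [crossB, ha, hb]
      · have hdisj := h.2.1 A hA A₀ hA₀ hne
        simp [crossB, disjoint_right.mp hdisj ha, disjoint_right.mp hdisj hb]
    rw [sum_eq_zero fun A hA => by simp [hcross A hA]]
    simp only [eq_false hsep, false_and]
    simp [crossB, h.subset hA₀ ha, h.subset hA₀ hb]

theorem isPartitionOf_image_singleton (S : Finset V) :
    IsPartitionOf S (S.image fun v => {v}) := by
  refine ⟨?_, ?_, ?_⟩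
  · simp
  · simp only [mem_image]
    rintro _ ⟨v, -, rfl⟩ _ ⟨w, -, rfl⟩ hne
    exact disjoint_singleton.mpr fun h => hne (h ▸ rfl)
  · ext v
    simp

theorem IsPartitionOf.disjoint {W W' : Finset V} {P Q : Finset (Finset V)}
    (hP : IsPartitionOf W P) (hQ : IsPartitionOf W' Q) (hWW' : Disjoint W W') :
    Disjoint P Q :=
  disjoint_left.mpr fun A hAP hAQ =>
    (hP.1 A hAP).ne_empty <| (disjoint_self_iff_empty A).mp <|
      hWW'.mono (hP.subset hAP) (hQ.subset hAQ)

theorem IsPartitionOf.union {W W' : Finset V} {P Q : Finset (Finset V)}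
    (hP : IsPartitionOf W P) (hQ : IsPartitionOf W' Q) (hWW' : Disjoint W W') :
    IsPartitionOf (W ∪ W') (P ∪ Q) := by
  refine ⟨?_, ?_, by rw [sup_union, hP.2.2, hQ.2.2]; rfl⟩
  · simp only [mem_union]
    rintro A (hA | hA)
    exacts [hP.1 A hA, hQ.1 A hA]
  · simp only [mem_union]
    rintro A (hA | hA) B (hB | hB) hne
    · exact hP.2.1 A hA B hB hne
    · exact hWW'.mono (hP.subset hA) (hQ.subset hB)
    · exact hWW'.symm.mono (hQ.subset hA) (hP.subset hB)
    · exact hQ.2.1 A hA B hB hne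

theorem IsPartitionOf.sum_union_image_singleton {M : Type*} [AddCommMonoid M] {W S : Finset V}
    {P : Finset (Finset V)} (hP : IsPartitionOf W P) (hWS : Disjoint W S) (f : Finset V → M) :
    ∑ A ∈ P ∪ S.image (fun v => {v}), f A = ∑ A ∈ P, f A + ∑ v ∈ S, f {v} := by
  rw [sum_union (hP.disjoint (isPartitionOf_image_singleton S) hWS),
    sum_image fun _ _ _ _ => singleton_inj.mp]

variable [Fintype V]

theorem IsPartitionOf.sum_cutE {W : Finset V} {P : Finset (Finset V)} (h : IsPartitionOf W P)
    (E : Multiset (Sym2 V)) :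
    ∑ A ∈ P, cutE E A = 2 * ePart (E.filter fun e => bothB W e = true) P + cutE E W := by
  simp only [cutE, ePart, Multiset.filter_filter, ← Multiset.countP_eq_card_filter,
    decide_eq_true_eq]
  induction E using Multiset.induction_on with
  | empty => simp
  | cons e E ih =>
    simp only [Multiset.countP_cons, sum_add_distrib, ih, h.sum_ite_crossB e]
    grind

theorem cutE_univ (E : Multiset (Sym2 V)) : cutE E univ = 0 := by
  refine Multiset.card_eq_zero.mpr (Multiset.filter_eq_nil.mpr fun e _ => ?_)
  induction e using Sym2.inductionOn with
  | hf a b => simp [crossB]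

theorem cutE_compl (E : Multiset (Sym2 V)) (X : Finset V) :
    cutE E (univ \ X) = cutE E X := by
  refine congrArg Multiset.card (Multiset.filter_congr fun e _ => ?_)
  induction e using Sym2.inductionOn with
  | hf a b => simp [crossB]

theorem ePart_image_singleton {E : Multiset (Sym2 V)} (hE : ∀ e ∈ E, ¬e.IsDiag)
    (S : Finset V) :
    ePart (E.filter fun e => bothB S e = true) (S.image fun v => {v}) = insideE E S := by
  refine congrArg Multiset.card (Multiset.filter_eq_self.mpr fun e he => ?_)
  have hne := hE e (Multiset.mem_of_mem_filter he)
  induction e using Sym2.inductionOn with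
  | hf a b =>
    simp only [Sym2.mk_isDiag_iff] at hne
    simp only [decide_eq_true_eq, forall_mem_image, bothB, Sym2.lift_mk,
      mem_singleton, Bool.and_eq_false_iff, decide_eq_false_iff_not]
    intro v _
    by_contra! hv
    exact hne (hv.1.trans hv.2.symm)

theorem sum_cutE_singleton {E : Multiset (Sym2 V)} (hE : ∀ e ∈ E, ¬e.IsDiag) (S : Finset V) :
    ∑ v ∈ S, cutE E {v} = 2 * insideE E S + cutE E S := by
  rw [← ePart_image_singleton hE, ← (isPartitionOf_image_singleton S).sum_cutE,
    sum_image fun _ _ _ _ => singleton_inj.mp]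

theorem IsPartitionOf.sum_cutE_add_two_mul_insideE {E : Multiset (Sym2 V)}
    (hE : ∀ e ∈ E, ¬e.IsDiag) {S : Finset V} {P : Finset (Finset V)}
    (hP : IsPartitionOf (univ \ S) P) :
    ∑ A ∈ P, cutE E A + 2 * insideE E S
      = 2 * ePart (E.filter fun e => bothB (univ \ S) e = true) P + ∑ v ∈ S, cutE E {v} := by
  rw [hP.sum_cutE, cutE_compl, sum_cutE_singleton hE]
  ring

theorem LPC.sum_sub_le {G : MGraph V} {l : Finset V → ℝ} {ε : ℝ} (hε : 0 < ε)
    (hpc : LPC G fun A => l A / ε) {P : Finset (Finset V)}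
    (hP : IsPartitionOf univ P) :
    ∑ A ∈ P, l A - l univ ≤ ε / 2 * ∑ A ∈ P, (cut G A : ℝ) := by
  have h := hpc P hP
  rw [← sum_div, ← sub_div, ge_iff_le, div_le_iff₀ hε] at h
  have hcut : ∑ A ∈ P, (cut G A : ℝ)
      = 2 * ePart (G.edges.filter fun e => bothB univ e = true) P := by
    simp only [cut]
    exact_mod_cast (hP.sum_cutE G.edges).trans (by rw [cutE_univ, add_zero])
  rw [hcut]
  linarith

end Paper

open Paper

theorem stmt6_general {V : Type*} [Fintype V] [DecidableEq V] (G G₀ : MGraph V)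
    (l : Finset V → ℝ) (ε : ℝ) (hε : 0 < ε)
    (hpc : LPC G (fun A => l A / ε))
    (hdeg : ∀ X : Finset V, (cut G₀ X : ℝ) ≥ ε * (cut G X : ℝ)) :
    ∀ S : Finset V, ∀ P : Finset (Finset V),
      IsLPCComponents G₀.edges (Finset.univ \ S) l P →
      ThetaVal G₀.edges (Finset.univ \ S) l P ≤
        (∑ v ∈ S, ((deg G₀ v : ℝ) / 2 + ε / 2 * (deg G v : ℝ) - l {v}))
          + l Finset.univ - (insideE G₀.edges S : ℝ) := by
  rintro S P ⟨hP, -, -⟩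
  have hPS : Disjoint (univ \ S) S := sdiff_disjoint
  have hbound := hpc.sum_sub_le hε <| sdiff_union_of_subset (subset_univ S) ▸
    hP.union (isPartitionOf_image_singleton S) hPS
  rw [hP.sum_union_image_singleton hPS, hP.sum_union_image_singleton hPS] at hbound
  have hcomp : ε * ∑ A ∈ P, (cut G A : ℝ) ≤ ∑ A ∈ P, (cut G₀ A : ℝ) := by
    rw [mul_sum]
    exact sum_le_sum fun A _ => hdeg A
  have hG₀ : ∑ A ∈ P, (cut G₀ A : ℝ) + 2 * insideE G₀.edges S
      = 2 * ePart (G₀.edges.filter fun e => bothB (univ \ S) e = true) P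
        + ∑ v ∈ S, (cut G₀ {v} : ℝ) :=
    mod_cast hP.sum_cutE_add_two_mul_insideE G₀.loopless
  simp only [ThetaVal, deg, sum_sub_distrib, sum_add_distrib, ← sum_div, ← mul_sum]
  linarith

theorem stmt6 {V : Type*} [Fintype V] [DecidableEq V] (G G₀ : MGraph V)
    (hsp : G₀.edges ≤ G.edges) (l : Finset V → ℝ) (hl0 : l ∅ = 0)
    (hsm : IntersectingSupermodular l) (ε : ℝ) (hε : 0 < ε)
    (hpc : LPC G (fun A => l A / ε))
    (hdeg : ∀ X : Finset V, (cut G₀ X : ℝ) ≥ ε * (cut G X : ℝ)) :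
    ∀ S : Finset V, ∀ P : Finset (Finset V),
      IsLPCComponents G₀.edges (Finset.univ \ S) l P →
      ThetaVal G₀.edges (Finset.univ \ S) l P ≤
        (∑ v ∈ S, ((deg G₀ v : ℝ) / 2 + ε / 2 * (deg G v : ℝ) - l {v}))
          + l Finset.univ - (insideE G₀.edges S : ℝ) :=
  stmt6_general G G₀ l ε hε hpc hdeg
end
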